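/- Let x ∈ Q(R) be dominant, fix a simple root α_{i₀}, and suppose z = y + (1/2)α_{i₀} lies in Q(R), where ⟨y, α_{i₀}^∨⟩ = 0, y is dominant, and ⟨y, ϖ_i⟩ ≤ ⟨x, ϖ_i⟩ for all i ∈ I. Suppose z is not dominant, with (unique) witness i₁ ∈ I \ {i₀} satisfying ⟨α_{i₀}, α_{i₁}^∨⟩ < −1 and ⟨z, α_{i₁}^∨⟩ = −1. Then z₁ := s_{α_{i₁}}(z) equals z + α_{i₁}, one has ⟨z₁, α_i^∨⟩ ≥ 0 for i = i₀ and i = i₁, and z₁ fails to be dominant if and only if there exists i₂ ∈ I \ {i₀, i₁} with ⟨α_{i₁}, α_{i₂}^∨⟩ = −1 and ⟨z, α_{i₂}^∨⟩ = 0; such an i₂, if it exists, is unique, and ⟨z₁, α_i^∨⟩ ≥ 0 for all i ∈ I \ {i₂}. -/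

import Mathlib

open Module

/-- An irreducible reduced (crystallographic) root system `R` in a real vector space `V`
(playing the role of `Q(R) ⊗ ℝ`), together with a base of simple roots indexed by `ι`,
the coroot pairings `u ↦ ⟨u, α^∨⟩` realised as linear functionals, and the fundamental
coweights `ϖ_i`, characterised by `⟨ϖ_i, α_j⟩ = δ_{ij}`. -/
structure RootSystemData (ι : Type*) (V : Type*) [Fintype ι] [DecidableEq ι]
    [AddCommGroup V] [Module ℝ V] where
  /-- the set of roots `R` -/
  isRoot : Set V
  /-- the coroot pairing: `coroot a u = ⟨u, a^∨⟩` -/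
  coroot : V → (V →ₗ[ℝ] ℝ)
  /-- the simple roots `α_i` -/
  sroot : ι → V
  sroot_mem : ∀ i, sroot i ∈ isRoot
  coroot_self : ∀ a ∈ isRoot, coroot a a = 2
  crystallographic : ∀ a ∈ isRoot, ∀ b ∈ isRoot, ∃ n : ℤ, coroot a b = (n : ℝ)
  reflect_mem : ∀ a ∈ isRoot, ∀ b ∈ isRoot, b - coroot a b • a ∈ isRoot
  reduced : ∀ a ∈ isRoot, ∀ t : ℝ, t • a ∈ isRoot → t = 1 ∨ t = -1
  finite : isRoot.Finite
  ne_zero : ∀ a ∈ isRoot, a ≠ 0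
  span_top : Submodule.span ℝ isRoot = ⊤
  /-- every root is a nonnegative or nonpositive integral combination of the simple roots -/
  base : ∀ a ∈ isRoot, (∃ c : ι → ℕ, a = ∑ i, (c i : ℝ) • sroot i) ∨
    (∃ c : ι → ℕ, a = -∑ i, (c i : ℝ) • sroot i)
  /-- the root system is irreducible -/
  irreducible : ∀ s t : Set V, isRoot = s ∪ t →
    (∀ a ∈ s, ∀ b ∈ t, coroot a b = 0) → s = ∅ ∨ t = ∅
  /-- the fundamental coweights `ϖ_i`, as linear functionals `u ↦ ⟨u, ϖ_i⟩` -/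
  coweight : ι → (V →ₗ[ℝ] ℝ)
  coweight_sroot : ∀ i j, coweight i (sroot j) = if i = j then 1 else 0

namespace RootSystemData

variable {ι V : Type*} [Fintype ι] [DecidableEq ι] [AddCommGroup V] [Module ℝ V]
variable (P : RootSystemData ι V)

/-- The root lattice `Q(R)`, i.e. the `ℤ`-span of the roots. -/
def rootLattice : AddSubgroup V := AddSubgroup.closure P.isRoot

/-- The Weyl group `W`, generated by the reflections in the roots. -/
def weylGroup : Subgroup (V ≃ₗ[ℝ] V) :=
  Subgroup.closure { w | ∃ a, ∃ ha : a ∈ P.isRoot, w = Module.reflection (P.coroot_self a ha) }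

/-- The Weyl orbit `O_x = {wx : w ∈ W}` of an element `x`. -/
def orbit (x : V) : Set V := { v | ∃ w ∈ P.weylGroup, v = w x }

/-- An element `u` is dominant if `⟨u, α_i^∨⟩ ≥ 0` for all `i ∈ I`. -/
def IsDominant (u : V) : Prop := ∀ i, 0 ≤ P.coroot (P.sroot i) u

/-- The simple reflection `s_{α_i}`. -/
def sref (i : ι) : V ≃ₗ[ℝ] V :=
  Module.reflection (P.coroot_self (P.sroot i) (P.sroot_mem i))

end RootSystemData

/-! Everything rests on one finiteness property of the Cartan matrix `aᵢⱼ = ⟨α_j, α_i^∨⟩`: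
no positive weighting of a set `s` of simple roots makes every column sum over `s` nonpositive,
since otherwise a root of maximal height supported on `s` would pair negatively with some `α_j`
and `s_{α_j}` would raise its height. Taking for the weights the null vectors of small affine
diagrams shows that around the bond `aᵢ₁ᵢ₀ ≤ -2` one has `aᵢ₀ᵢ₁ = -1`, no other `i` has
`aᵢᵢ₀ ≤ -2`, no `i` has `aᵢᵢ₁ ≤ -2`, and `i₁` has at most one neighbour besides `i₀`. Hence
`⟨z, α_i^∨⟩ = ⟨y, α_i^∨⟩ + ½ aᵢᵢ₀` is a nonnegative integer for `i ∉ {i₀, i₁}`, and adding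
`α_{i₁}` lowers it by `-aᵢᵢ₁ ∈ {0, 1}`. -/

lemma le_sub_one_of_lt_of_isInt {x y : ℝ} (hx : ∃ n : ℤ, x = n) (hy : ∃ n : ℤ, y = n)
    (h : x < y) : x ≤ y - 1 := by
  obtain ⟨m, rfl⟩ := hx
  obtain ⟨n, rfl⟩ := hy
  exact_mod_cast Int.le_sub_one_of_lt (by exact_mod_cast h)

namespace RootSystemData

open Finset

variable {ι V : Type*} [Fintype ι] [DecidableEq ι] [AddCommGroup V] [Module ℝ V]
variable (P : RootSystemData ι V)

lemma sref_apply (i : ι) (v : V) : P.sref i v = v - P.coroot (P.sroot i) v • P.sroot i :=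
  Module.reflection_apply _ _

lemma neg_mem_isRoot {a : V} (ha : a ∈ P.isRoot) : -a ∈ P.isRoot := by
  have := P.reflect_mem a ha a ha
  rwa [P.coroot_self a ha, two_smul, sub_add_cancel_left] at this

lemma coweight_sum_smul_sroot (m : ι → ℝ) (j : ι) :
    P.coweight j (∑ k, m k • P.sroot k) = m j := by
  simp [map_sum, P.coweight_sroot]

lemma eq_sum_coweight_smul_sroot {r : V} (hr : r ∈ P.isRoot) :
    r = ∑ k, P.coweight k r • P.sroot k := by
  rcases P.base r hr with ⟨c, rfl⟩ | ⟨c, rfl⟩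
  · simp only [coweight_sum_smul_sroot]
  · simp only [map_neg, coweight_sum_smul_sroot, neg_smul, sum_neg_distrib]

lemma coweight_nonneg_or_nonpos {r : V} (hr : r ∈ P.isRoot) :
    (∀ k, 0 ≤ P.coweight k r) ∨ (∀ k, P.coweight k r ≤ 0) := by
  rcases P.base r hr with ⟨c, rfl⟩ | ⟨c, rfl⟩
  · left; simp only [coweight_sum_smul_sroot]; simp
  · right; simp only [map_neg, coweight_sum_smul_sroot]; simp

lemma exists_int_coroot_eq {a v : V} (ha : a ∈ P.isRoot) (hv : v ∈ P.rootLattice) :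
    ∃ n : ℤ, P.coroot a v = n := by
  induction hv using AddSubgroup.closure_induction with
  | mem b hb => exact P.crystallographic a ha b hb
  | zero => exact ⟨0, by simp⟩
  | add u w _ _ hu hw =>
    obtain ⟨m, hm⟩ := hu
    obtain ⟨n, hn⟩ := hw
    exact ⟨m + n, by simp [hm, hn]⟩
  | neg u _ hu =>
    obtain ⟨m, hm⟩ := hu
    exact ⟨-m, by simp [hm]⟩

/-- Orthogonality of roots is symmetric: otherwise `-(s_v ∘ s_u)` would translate `v` along the
infinite line `v + ℝ u` inside the finite set of roots. -/
theorem coroot_eq_zero_of_coroot_eq_zero {u v : V} (hu : u ∈ P.isRoot) (hv : v ∈ P.isRoot)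
    (h : P.coroot v u = 0) : P.coroot u v = 0 := by
  by_contra hB
  set B := P.coroot u v
  have step : ∀ c : ℝ, v + c • u ∈ P.isRoot → v + (c + B) • u ∈ P.isRoot := by
    intro c hc
    have := P.neg_mem_isRoot (P.reflect_mem v hv _ (P.reflect_mem u hu _ hc))
    convert this using 1
    simp only [map_add, map_sub, map_smul, P.coroot_self u hu, P.coroot_self v hv, h, smul_eq_mul]
    module
  have hline : ∀ n : ℕ, v + ((n : ℝ) * B) • u ∈ P.isRoot := by
    intro n
    induction n with
    | zero => simpa using hv
    | succ n ih => simpa [add_mul] using step _ ih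
  refine P.finite.not_infinite (Set.infinite_of_injective_forall_mem ?_ hline)
  intro m n hmn
  have := smul_left_injective ℝ (P.ne_zero u hu) (add_left_cancel hmn)
  exact_mod_cast mul_right_cancel₀ hB this

theorem coroot_sroot_nonpos {i j : ι} (hij : i ≠ j) :
    P.coroot (P.sroot i) (P.sroot j) ≤ 0 := by
  by_contra! hpos
  have hβ := P.reflect_mem _ (P.sroot_mem i) _ (P.sroot_mem j)
  rcases P.coweight_nonneg_or_nonpos hβ with h | h
  · have := h i
    simp [P.coweight_sroot, hij] at this
    linarith
  · have := h j
    simp [P.coweight_sroot, hij.symm] at this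
    linarith

@[simp]
lemma coroot_sroot_self (i : ι) : P.coroot (P.sroot i) (P.sroot i) = 2 :=
  P.coroot_self _ (P.sroot_mem i)

lemma exists_int_coroot_sroot (i j : ι) : ∃ n : ℤ, P.coroot (P.sroot i) (P.sroot j) = n :=
  P.crystallographic _ (P.sroot_mem i) _ (P.sroot_mem j)

theorem coroot_sroot_le_neg_one {i j : ι} (hij : i ≠ j)
    (h : P.coroot (P.sroot i) (P.sroot j) ≠ 0) : P.coroot (P.sroot i) (P.sroot j) ≤ -1 := by
  simpa using le_sub_one_of_lt_of_isInt (P.exists_int_coroot_sroot i j) ⟨0, by simp⟩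
    (lt_of_le_of_ne (P.coroot_sroot_nonpos hij) h)

theorem coroot_sroot_le_neg_two {i j : ι} (h : P.coroot (P.sroot i) (P.sroot j) < -1) :
    P.coroot (P.sroot i) (P.sroot j) ≤ -2 := by
  linarith [le_sub_one_of_lt_of_isInt (P.exists_int_coroot_sroot i j) ⟨-1, by simp⟩ h]

theorem coroot_sroot_ne_zero_comm {i j : ι} (h : P.coroot (P.sroot i) (P.sroot j) ≠ 0) :
    P.coroot (P.sroot j) (P.sroot i) ≠ 0 :=
  mt (P.coroot_eq_zero_of_coroot_eq_zero (P.sroot_mem i) (P.sroot_mem j)) h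

def height : V →ₗ[ℝ] ℝ := ∑ k, P.coweight k

lemma height_sroot (j : ι) : P.height (P.sroot j) = 1 := by
  simp [height, P.coweight_sroot]

lemma exists_coroot_sroot_neg {s : Finset ι} {w : ι → ℝ} (hw : ∀ j ∈ s, 0 < w j)
    (hcol : ∀ k ∈ s, ∑ j ∈ s, w j * P.coroot (P.sroot j) (P.sroot k) ≤ 0)
    {r : V} (hr : r ∈ P.isRoot) (hrs : ∀ k ∉ s, P.coweight k r = 0)
    (hpos : ∀ k, 0 ≤ P.coweight k r) : ∃ j ∈ s, P.coroot (P.sroot j) r < 0 := by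
  by_contra! hnn
  have hr_sum : r = ∑ k ∈ s, P.coweight k r • P.sroot k := by
    conv_lhs => rw [P.eq_sum_coweight_smul_sroot hr]
    exact (sum_subset (subset_univ s) fun k _ hk => by simp [hrs k hk]).symm
  have hφ : ∑ j ∈ s, w j * P.coroot (P.sroot j) r =
      ∑ k ∈ s, P.coweight k r * ∑ j ∈ s, w j * P.coroot (P.sroot j) (P.sroot k) := by
    conv_lhs => rw [hr_sum]
    simp only [map_sum, map_smul, smul_eq_mul, mul_sum]
    rw [sum_comm]
    exact sum_congr rfl fun _ _ => sum_congr rfl fun _ _ => by ring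
  have horth : ∀ j ∈ s, P.coroot (P.sroot j) r = 0 := by
    have hle : ∑ j ∈ s, w j * P.coroot (P.sroot j) r ≤ 0 := hφ ▸
      sum_nonpos fun k hk => mul_nonpos_of_nonneg_of_nonpos (hpos k) (hcol k hk)
    have hzero := (sum_eq_zero_iff_of_nonneg fun j hj =>
      mul_nonneg (hw j hj).le (hnn j hj)).mp (le_antisymm hle
        (sum_nonneg fun j hj => mul_nonneg (hw j hj).le (hnn j hj)))
    intro j hj
    exact (mul_eq_zero.mp (hzero j hj)).resolve_left (hw j hj).ne'
  have h2 : P.coroot r r = 0 := by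
    conv_lhs => arg 2; rw [hr_sum]
    simp only [map_sum, map_smul, smul_eq_mul]
    exact sum_eq_zero fun k hk => by
      rw [P.coroot_eq_zero_of_coroot_eq_zero hr (P.sroot_mem k) (horth k hk), mul_zero]
  rw [P.coroot_self r hr] at h2
  norm_num at h2

/-- No principal submatrix of the Cartan matrix is of affine or indefinite type. -/
theorem exists_pos_sum_mul_coroot_sroot {s : Finset ι} (hs : s.Nonempty) {w : ι → ℝ}
    (hw : ∀ j ∈ s, 0 < w j) :
    ∃ k ∈ s, 0 < ∑ j ∈ s, w j * P.coroot (P.sroot j) (P.sroot k) := by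
  by_contra! hcol
  obtain ⟨k₀, hk₀⟩ := hs
  set S := {r ∈ P.isRoot | ∀ k ∉ s, P.coweight k r = 0}
  have hk₀S : P.sroot k₀ ∈ S := ⟨P.sroot_mem k₀, fun k hk => by
    simp [P.coweight_sroot, (ne_of_mem_of_not_mem hk₀ hk).symm]⟩
  obtain ⟨r, ⟨hr, hrs⟩, hmax⟩ :=
    Set.exists_max_image S P.height (P.finite.subset (Set.sep_subset _ _)) ⟨_, hk₀S⟩
  have hheight : 1 ≤ P.height r := P.height_sroot k₀ ▸ hmax _ hk₀S
  have hpos : ∀ k, 0 ≤ P.coweight k r := by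
    refine (P.coweight_nonneg_or_nonpos hr).resolve_right fun hneg => ?_
    have : P.height r ≤ 0 := by
      simpa [height] using sum_nonpos fun k _ => hneg k
    linarith
  obtain ⟨j, hj, hrj⟩ := P.exists_coroot_sroot_neg hw hcol hr hrs hpos
  have := hmax _ ⟨P.reflect_mem _ (P.sroot_mem j) r hr, fun k hk => by
    simp [hrs k hk, P.coweight_sroot, ne_of_mem_of_not_mem hj hk |>.symm]⟩
  rw [map_sub, map_smul, height_sroot, smul_eq_mul, mul_one] at this
  linarith

theorem coroot_sroot_eq_neg_one_of_lt_neg_one {i j : ι} (hij : i ≠ j)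
    (h : P.coroot (P.sroot i) (P.sroot j) < -1) : P.coroot (P.sroot j) (P.sroot i) = -1 := by
  have := P.coroot_sroot_le_neg_two h
  have hji := P.coroot_sroot_le_neg_one hij.symm (P.coroot_sroot_ne_zero_comm (by linarith))
  refine le_antisymm hji (not_lt.mp fun hji' => ?_)
  have := P.coroot_sroot_le_neg_two hji'
  obtain ⟨k, hk, hpos⟩ := P.exists_pos_sum_mul_coroot_sroot (s := {i, j}) (w := 1)
    (by simp) (by simp)
  simp only [mem_insert, mem_singleton] at hk
  rcases hk with rfl | rfl <;> simp [sum_pair hij] at hpos <;> linarith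

theorem eq_of_coroot_sroot_lt_neg_one {i j k : ι} (hik : i ≠ k) (hjk : j ≠ k)
    (hi : P.coroot (P.sroot i) (P.sroot k) < -1) (hj : P.coroot (P.sroot j) (P.sroot k) < -1) :
    i = j := by
  by_contra hij
  have := P.coroot_sroot_le_neg_two hi
  have := P.coroot_sroot_le_neg_two hj
  have := P.coroot_sroot_le_neg_one hik.symm (P.coroot_sroot_ne_zero_comm (by linarith))
  have := P.coroot_sroot_le_neg_one hjk.symm (P.coroot_sroot_ne_zero_comm (by linarith))
  have := P.coroot_sroot_nonpos hij
  have := P.coroot_sroot_nonpos (Ne.symm hij)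
  obtain ⟨l, hl, hpos⟩ := P.exists_pos_sum_mul_coroot_sroot (s := {k, i, j})
    (w := fun l => if l = k then 2 else 1) (by simp) (by intro l _; split_ifs <;> norm_num)
  simp only [mem_insert, mem_singleton] at hl
  rcases hl with rfl | rfl | rfl <;>
    simp [sum_insert, hik, hjk, hij, hik.symm, hjk.symm] at hpos <;> linarith

theorem neg_one_le_coroot_sroot_of_lt_neg_one {i₀ i₁ i : ι} (h₁₀ : i₁ ≠ i₀) (hi₀ : i ≠ i₀)
    (hi₁ : i ≠ i₁) (h : P.coroot (P.sroot i₁) (P.sroot i₀) < -1) :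
    -1 ≤ P.coroot (P.sroot i) (P.sroot i₁) := by
  refine not_lt.mp fun hi => ?_
  have := P.coroot_sroot_le_neg_two h
  have := P.coroot_sroot_le_neg_two hi
  have := P.coroot_sroot_le_neg_one h₁₀.symm (P.coroot_sroot_ne_zero_comm (by linarith))
  have := P.coroot_sroot_le_neg_one hi₁.symm (P.coroot_sroot_ne_zero_comm (by linarith))
  have := P.coroot_sroot_nonpos hi₀
  have := P.coroot_sroot_nonpos hi₀.symm
  obtain ⟨l, hl, hpos⟩ := P.exists_pos_sum_mul_coroot_sroot (s := {i₀, i₁, i})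
    (w := fun l => if l = i then 1 else 2) (by simp) (by intro l _; split_ifs <;> norm_num)
  simp only [mem_insert, mem_singleton] at hl
  rcases hl with rfl | rfl | rfl <;>
    simp [sum_insert, h₁₀.symm, hi₀.symm, hi₁.symm] at hpos <;> linarith

theorem eq_of_coroot_sroot_ne_zero {i₀ i₁ p q : ι} (h₁₀ : i₁ ≠ i₀) (hp₀ : p ≠ i₀) (hp₁ : p ≠ i₁)
    (hq₀ : q ≠ i₀) (hq₁ : q ≠ i₁) (h : P.coroot (P.sroot i₁) (P.sroot i₀) < -1)
    (hp : P.coroot (P.sroot p) (P.sroot i₁) ≠ 0) (hq : P.coroot (P.sroot q) (P.sroot i₁) ≠ 0) :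
    p = q := by
  by_contra hpq
  have := P.coroot_sroot_le_neg_two h
  have := P.coroot_sroot_le_neg_one h₁₀.symm (P.coroot_sroot_ne_zero_comm (by linarith))
  have := P.coroot_sroot_le_neg_one hp₁ hp
  have := P.coroot_sroot_le_neg_one hq₁ hq
  have := P.coroot_sroot_le_neg_one hp₁.symm (P.coroot_sroot_ne_zero_comm hp)
  have := P.coroot_sroot_le_neg_one hq₁.symm (P.coroot_sroot_ne_zero_comm hq)
  have := P.coroot_sroot_nonpos hp₀
  have := P.coroot_sroot_nonpos hp₀.symm
  have := P.coroot_sroot_nonpos hq₀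
  have := P.coroot_sroot_nonpos hq₀.symm
  have := P.coroot_sroot_nonpos hpq
  have := P.coroot_sroot_nonpos (Ne.symm hpq)
  obtain ⟨l, hl, hpos⟩ := P.exists_pos_sum_mul_coroot_sroot (s := {i₀, i₁, p, q})
    (w := fun l => if l = i₀ ∨ l = i₁ then 2 else 1) (by simp)
    (by intro l _; split_ifs <;> norm_num)
  simp only [mem_insert, mem_singleton] at hl
  rcases hl with rfl | rfl | rfl | rfl <;>
    simp [sum_insert, h₁₀, hp₀, hp₁, hq₀, hq₁, hpq, h₁₀.symm, hp₀.symm, hp₁.symm, hq₀.symm,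
      hq₁.symm] at hpos <;> linarith

theorem coroot_sroot_nonneg_of_eq_add_half {y z : V} {i₀ i₁ i : ι}
    (hz : z = y + (1 / 2 : ℝ) • P.sroot i₀) (hzQ : z ∈ P.rootLattice) (hy : P.IsDominant y)
    (h₁₀ : i₁ ≠ i₀) (h : P.coroot (P.sroot i₁) (P.sroot i₀) < -1) (hi₀ : i ≠ i₀) (hi₁ : i ≠ i₁) :
    0 ≤ P.coroot (P.sroot i) z := by
  have hi : -1 ≤ P.coroot (P.sroot i) (P.sroot i₀) :=
    not_lt.mp fun hlt => hi₁ (P.eq_of_coroot_sroot_lt_neg_one hi₀ h₁₀ hlt h)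
  have hzi : P.coroot (P.sroot i) z =
      P.coroot (P.sroot i) y + 1 / 2 * P.coroot (P.sroot i) (P.sroot i₀) := by
    rw [hz, map_add, map_smul, smul_eq_mul]
  linarith [hy i, le_sub_one_of_lt_of_isInt ⟨-1, by simp⟩
    (P.exists_int_coroot_eq (P.sroot_mem i) hzQ) (by linarith [hy i] : (-1 : ℝ) < _)]

theorem coroot_add_sroot_neg_iff {z : V} {i₀ i₁ : ι} (hzQ : z ∈ P.rootLattice) (h₁₀ : i₁ ≠ i₀)
    (h : P.coroot (P.sroot i₁) (P.sroot i₀) < -1) (hz₀ : P.coroot (P.sroot i₀) z = 1)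
    (hz₁ : P.coroot (P.sroot i₁) z = -1)
    (hz : ∀ i, i ≠ i₀ → i ≠ i₁ → 0 ≤ P.coroot (P.sroot i) z) (i : ι) :
    P.coroot (P.sroot i) (z + P.sroot i₁) < 0 ↔ i ≠ i₀ ∧ i ≠ i₁ ∧
      P.coroot (P.sroot i) (P.sroot i₁) = -1 ∧ P.coroot (P.sroot i) z = 0 := by
  have hint := P.exists_int_coroot_eq (P.sroot_mem i)
    (add_mem hzQ (AddSubgroup.subset_closure (P.sroot_mem i₁)))
  rw [map_add]
  refine ⟨fun hneg => ?_, fun ⟨_, _, hi, hzi⟩ => by rw [hi, hzi]; norm_num⟩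
  have hi₀ : i ≠ i₀ := by
    rintro rfl
    linarith [P.coroot_sroot_eq_neg_one_of_lt_neg_one h₁₀ h]
  have hi₁ : i ≠ i₁ := by
    rintro rfl
    linarith [P.coroot_sroot_self i]
  have := le_sub_one_of_lt_of_isInt (map_add (P.coroot (P.sroot i)) z _ ▸ hint) ⟨0, by simp⟩ hneg
  have := P.neg_one_le_coroot_sroot_of_lt_neg_one h₁₀ hi₀ hi₁ h
  have := hz i hi₀ hi₁
  exact ⟨hi₀, hi₁, by linarith, by linarith⟩

end RootSystemData

theorem statement8_general {ι V : Type*} [Fintype ι] [DecidableEq ι] [AddCommGroup V] [Module ℝ V]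
    (P : RootSystemData ι V) (y z : V) (i₀ i₁ : ι)
    (hz : z = y + (1 / 2 : ℝ) • P.sroot i₀) (hzQ : z ∈ P.rootLattice)
    (h1 : P.coroot (P.sroot i₀) y = 0)
    (h2 : P.IsDominant y)
    (hi₁ : i₁ ≠ i₀) (hi₁p : P.coroot (P.sroot i₁) (P.sroot i₀) < -1)
    (hi₁z : P.coroot (P.sroot i₁) z = -1) :
    P.sref i₁ z = z + P.sroot i₁ ∧
    0 ≤ P.coroot (P.sroot i₀) (z + P.sroot i₁) ∧
    0 ≤ P.coroot (P.sroot i₁) (z + P.sroot i₁) ∧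
    (¬ P.IsDominant (z + P.sroot i₁) ↔ ∃ i₂, i₂ ≠ i₀ ∧ i₂ ≠ i₁ ∧
      P.coroot (P.sroot i₂) (P.sroot i₁) = -1 ∧ P.coroot (P.sroot i₂) z = 0) ∧
    (∀ i₂ i₂', (i₂ ≠ i₀ ∧ i₂ ≠ i₁ ∧
        P.coroot (P.sroot i₂) (P.sroot i₁) = -1 ∧ P.coroot (P.sroot i₂) z = 0) →
      (i₂' ≠ i₀ ∧ i₂' ≠ i₁ ∧
        P.coroot (P.sroot i₂') (P.sroot i₁) = -1 ∧ P.coroot (P.sroot i₂') z = 0) →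
      i₂ = i₂') ∧
    (∀ i₂, (i₂ ≠ i₀ ∧ i₂ ≠ i₁ ∧
        P.coroot (P.sroot i₂) (P.sroot i₁) = -1 ∧ P.coroot (P.sroot i₂) z = 0) →
      ∀ i, i ≠ i₂ → 0 ≤ P.coroot (P.sroot i) (z + P.sroot i₁)) := by
  have hz₀ : P.coroot (P.sroot i₀) z = 1 := by
    rw [hz, map_add, map_smul, h1, P.coroot_sroot_self]
    norm_num
  have hneg := P.coroot_add_sroot_neg_iff hzQ hi₁ hi₁p hz₀ hi₁z
    fun i hi₀ hi₁' => P.coroot_sroot_nonneg_of_eq_add_half hz hzQ h2 hi₁ hi₁p hi₀ hi₁'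
  have huniq : ∀ p q, (p ≠ i₀ ∧ p ≠ i₁ ∧
      P.coroot (P.sroot p) (P.sroot i₁) = -1 ∧ P.coroot (P.sroot p) z = 0) →
      (q ≠ i₀ ∧ q ≠ i₁ ∧ P.coroot (P.sroot q) (P.sroot i₁) = -1 ∧ P.coroot (P.sroot q) z = 0) →
      p = q := fun p q ⟨hp₀, hp₁, hp, _⟩ ⟨hq₀, hq₁, hq, _⟩ =>
    P.eq_of_coroot_sroot_ne_zero hi₁ hp₀ hp₁ hq₀ hq₁ hi₁p (by simp [hp]) (by simp [hq])
  refine ⟨by rw [P.sref_apply, hi₁z]; module, not_lt.mp fun h => ((hneg i₀).mp h).1 rfl,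
    not_lt.mp fun h => ((hneg i₁).mp h).2.1 rfl, ?_, huniq,
    fun i₂ hi₂ i hi => not_lt.mp fun h => hi (huniq _ _ ((hneg i).mp h) hi₂)⟩
  simp only [RootSystemData.IsDominant, not_forall, not_le, hneg]

/-- With `x, y, z, i₀` as in Lemma 1.1, suppose `z` is not dominant, with
(unique) witness `i₁ ∈ I \ {i₀}` satisfying `⟨α_{i₀}, α_{i₁}^∨⟩ < −1` and
`⟨z, α_{i₁}^∨⟩ = −1`. Then `z₁ := s_{α_{i₁}}(z)` equals `z + α_{i₁}`, one has
`⟨z₁, α_i^∨⟩ ≥ 0` for `i = i₀` and `i = i₁`, and `z₁` fails to be dominant iff there exists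
`i₂ ∈ I \ {i₀, i₁}` with `⟨α_{i₁}, α_{i₂}^∨⟩ = −1` and `⟨z, α_{i₂}^∨⟩ = 0`; such an `i₂`,
if it exists, is unique, and `⟨z₁, α_i^∨⟩ ≥ 0` for all `i ∈ I \ {i₂}`. -/
theorem statement8 {ι V : Type*} [Fintype ι] [DecidableEq ι] [AddCommGroup V] [Module ℝ V]
    (P : RootSystemData ι V) (x y z : V) (i₀ i₁ : ι)
    (hx : x ∈ P.rootLattice) (hxdom : P.IsDominant x)
    (hz : z = y + (1 / 2 : ℝ) • P.sroot i₀) (hzQ : z ∈ P.rootLattice)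
    (h1 : P.coroot (P.sroot i₀) y = 0)
    (h2 : P.IsDominant y)
    (h3 : ∀ i, P.coweight i y ≤ P.coweight i x)
    (hznd : ¬ P.IsDominant z)
    (hi₁ : i₁ ≠ i₀) (hi₁p : P.coroot (P.sroot i₁) (P.sroot i₀) < -1)
    (hi₁z : P.coroot (P.sroot i₁) z = -1) :
    P.sref i₁ z = z + P.sroot i₁ ∧
    0 ≤ P.coroot (P.sroot i₀) (z + P.sroot i₁) ∧
    0 ≤ P.coroot (P.sroot i₁) (z + P.sroot i₁) ∧
    (¬ P.IsDominant (z + P.sroot i₁) ↔ ∃ i₂, i₂ ≠ i₀ ∧ i₂ ≠ i₁ ∧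
      P.coroot (P.sroot i₂) (P.sroot i₁) = -1 ∧ P.coroot (P.sroot i₂) z = 0) ∧
    (∀ i₂ i₂', (i₂ ≠ i₀ ∧ i₂ ≠ i₁ ∧
        P.coroot (P.sroot i₂) (P.sroot i₁) = -1 ∧ P.coroot (P.sroot i₂) z = 0) →
      (i₂' ≠ i₀ ∧ i₂' ≠ i₁ ∧
        P.coroot (P.sroot i₂') (P.sroot i₁) = -1 ∧ P.coroot (P.sroot i₂') z = 0) →
      i₂ = i₂') ∧
    (∀ i₂, (i₂ ≠ i₀ ∧ i₂ ≠ i₁ ∧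
        P.coroot (P.sroot i₂) (P.sroot i₁) = -1 ∧ P.coroot (P.sroot i₂) z = 0) →
      ∀ i, i ≠ i₂ → 0 ≤ P.coroot (P.sroot i) (z + P.sroot i₁)) :=
  statement8_general P y z i₀ i₁ hz hzQ h1 h2 hi₁ hi₁p hi₁z
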